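/- arXiv:1506.05306 — 3 statements merged into one kernel-verified Lean document; each statement's English description precedes it below -/
import Mathlib

section
/- Fix a real β > −1 and integers n, k with 0 ≤ k and k + 1 ≤ n. Then for every real α with α > −1 and α − β > −1, and all reals x > 0 and y, the function α ↦ P^{(α,β)}_{n,k}(x,y) (Laguerre–Laguerre Koornwinder polynomial) is differentiable at α with derivative ∑_{s=0}^{n−k−1} (1/(n−k−s)) · P^{(α,β)}_{k+s,k}(x,y). -/
/-!
The coefficient of `(-x)^i` in `L_n^{(α)}(x)` is `(α+i+1)_{n-i} / ((n-i)! i!)`. Induction on `m`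
with `(b)_{m+1} / (m+1)! = (b)_m / m! · (b+m)/(m+1)` gives
`∂_b [(b)_m / m!] = ∑_{t<m} (b)_t / (t! (m-t))`. Differentiating `L_n^{(α)}` termwise and regrouping
the double sum along the diagonals `s = i + t` gives `∂_α L_n^{(α)} = ∑_{s<n} L_s^{(α)} / (n-s)`.
Only the first factor `L_{n-k}^{(α+2k+1)}(x)` of `P_{n,k}^{(α,β)}` depends on `α`.
-/

open Finset MeasureTheory Real

/-- Pochhammer symbol `(a)_m = a (a+1) ⋯ (a+m-1)`. -/
noncomputable def poch (a : ℝ) (m : ℕ) : ℝ := ∏ i ∈ Finset.range m, (a + i)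

/-- Jacobi polynomial `P_n^{(α,β)}(x)`. -/
noncomputable def jacobiP (α β : ℝ) (n : ℕ) (x : ℝ) : ℝ :=
  ∑ i ∈ Finset.range (n + 1),
    poch (α + i + 1) (n - i) * poch (n + α + β + 1) i /
      ((Nat.factorial (n - i) : ℝ) * (Nat.factorial i : ℝ)) * ((x - 1) / 2) ^ i

/-- Generalized Laguerre polynomial `L_n^{(α)}(x)`. -/
noncomputable def laguerreL (α : ℝ) (n : ℕ) (x : ℝ) : ℝ :=
  ∑ i ∈ Finset.range (n + 1),
    poch (α + i + 1) (n - i) / ((Nat.factorial (n - i) : ℝ) * (Nat.factorial i : ℝ)) * (-x) ^ i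

/-- Laguerre–Laguerre Koornwinder polynomial
`P^{(α,β)}_{n,k}(x,y) = L^{(α+2k+1)}_{n-k}(x) · x^k · L^{(β)}_k(y/x)`. -/
noncomputable def llP (α β : ℝ) (n k : ℕ) (x y : ℝ) : ℝ :=
  laguerreL (α + 2 * k + 1) (n - k) x * x ^ k * laguerreL β k (y / x)

open scoped Nat

theorem poch_succ_div_factorial (b : ℝ) (t : ℕ) :
    poch b (t + 1) / (t + 1)! = poch b t / t ! * ((b + t) / (t + 1)) := by
  rw [poch, prod_range_succ, ← poch, Nat.factorial_succ]
  push_cast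
  field_simp

theorem sum_poch_div_factorial_mul_sub_succ (m : ℕ) (b : ℝ) :
    ∑ t ∈ range (m + 1), poch b t / (t ! * (((m + 1 : ℕ) : ℝ) - t)) =
      (∑ t ∈ range m, poch b t / (t ! * ((m : ℝ) - t))) * ((b + m) / (m + 1)) +
        poch b m / m ! * (1 / (m + 1)) := by
  set f : ℕ → ℝ := fun t => poch b t / t ! with hf
  have hsplit : ∀ t ∈ range (m + 1), poch b t / (t ! * (((m + 1 : ℕ) : ℝ) - t)) =
      (f t + t * f t / ((m + 1 : ℕ) - t)) / (m + 1) := by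
    intro t ht
    have : (((m + 1 : ℕ) : ℝ) - t) ≠ 0 :=
      sub_ne_zero.mpr (by exact_mod_cast (mem_range.mp ht).ne')
    simp only [hf]; push_cast at this ⊢
    field_simp; ring
  have hshift : ∀ t ∈ range m,
      ((t + 1 : ℕ) : ℝ) * f (t + 1) / ((m + 1 : ℕ) - (t + 1 : ℕ)) =
        (b + t) * f t / (m - t) := by
    intro t _
    simp only [hf, poch_succ_div_factorial]; push_cast
    field_simp; ring
  have hmerge : ∀ t ∈ range m,
      f t + (b + t) * f t / (m - t) = (b + m) * (poch b t / (t ! * (m - t))) := by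
    intro t ht
    have : (m : ℝ) - t ≠ 0 := sub_ne_zero.mpr (by exact_mod_cast (mem_range.mp ht).ne')
    simp only [hf]; field_simp; ring
  calc ∑ t ∈ range (m + 1), poch b t / (t ! * (((m + 1 : ℕ) : ℝ) - t))
      = (∑ t ∈ range (m + 1), f t + ∑ t ∈ range (m + 1), t * f t / ((m + 1 : ℕ) - t)) /
          (m + 1) := by rw [sum_congr rfl hsplit, ← sum_div, sum_add_distrib]
    _ = (f m + ∑ t ∈ range m, (f t + (b + t) * f t / (m - t))) / (m + 1) := by
      rw [sum_range_succ' (fun t : ℕ => (t : ℝ) * f t / ((m + 1 : ℕ) - t)),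
        sum_congr rfl hshift, sum_range_succ, sum_add_distrib]
      push_cast; ring
    _ = _ := by rw [sum_congr rfl hmerge, ← mul_sum]; ring

theorem hasDerivAt_poch_div_factorial (m : ℕ) (b : ℝ) :
    HasDerivAt (fun a => poch a m / m !)
      (∑ t ∈ range m, poch b t / (t ! * ((m : ℝ) - t))) b := by
  induction m with
  | zero => simpa [poch] using hasDerivAt_const b (1 : ℝ)
  | succ m ih =>
    have hstep : (fun a => poch a (m + 1) / (m + 1)!) =
        fun a => poch a m / m ! * ((a + m) / (m + 1)) :=
      funext fun a => poch_succ_div_factorial a m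
    have hlin : HasDerivAt (fun a : ℝ => (a + m) / (m + 1)) (1 / (m + 1)) b :=
      ((hasDerivAt_id' b).add_const _).div_const _
    rw [hstep, sum_poch_div_factorial_mul_sub_succ]
    exact ih.mul hlin

theorem hasDerivAt_laguerreL_param (n : ℕ) (α x : ℝ) :
    HasDerivAt (fun a => laguerreL a n x)
      (∑ s ∈ range n, 1 / ((n : ℝ) - s) * laguerreL α s x) α := by
  have hterm : ∀ i ∈ range (n + 1), HasDerivAt
      (fun a => poch (a + i + 1) (n - i) / (n - i)! * ((-x) ^ i / i !))
      ((∑ t ∈ range (n - i), poch (α + i + 1) t / (t ! * (((n - i : ℕ) : ℝ) - t))) *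
        ((-x) ^ i / i !)) α := fun i _ => by
    simpa using ((hasDerivAt_poch_div_factorial (n - i) (α + i + 1)).comp α
      (((hasDerivAt_id' α).add_const (i : ℝ)).add_const 1)).mul_const ((-x) ^ i / i !)
  have hL : (fun a => laguerreL a n x) =
      fun a => ∑ i ∈ range (n + 1), poch (a + i + 1) (n - i) / (n - i)! * ((-x) ^ i / i !) := by
    funext a
    refine sum_congr rfl fun i _ => ?_
    ring
  rw [hL]
  refine (HasDerivAt.fun_sum hterm).congr_deriv ?_
  set g : ℕ → ℕ → ℝ := fun i t =>
    poch (α + i + 1) t / (t ! * ((n : ℝ) - (i + t : ℕ))) * ((-x) ^ i / i !) with hg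
  calc _ = ∑ i ∈ range n, ∑ t ∈ range (n - i), g i t := by
        rw [sum_range_succ, Nat.sub_self, sum_range_zero, zero_mul, add_zero]
        refine sum_congr rfl fun i hi => ?_
        rw [sum_mul]
        refine sum_congr rfl fun t _ => ?_
        rw [mem_range] at hi
        simp only [hg]
        push_cast [Nat.cast_sub hi.le]
        ring_nf
    _ = ∑ s ∈ range n, ∑ i ∈ range (s + 1), g i (s - i) := (sum_range_diag_flip n g).symm
    _ = _ := by
        refine sum_congr rfl fun s _ => ?_
        rw [laguerreL, mul_sum]
        refine sum_congr rfl fun i hi => ?_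
        rw [mem_range] at hi
        simp only [hg, Nat.add_sub_cancel' (Nat.lt_succ_iff.mp hi)]
        field_simp

theorem llP_hasDerivAt_param_alpha_general
    (β : ℝ) (n k : ℕ)
    (α : ℝ) (x : ℝ) (y : ℝ) :
    HasDerivAt (fun a : ℝ => llP a β n k x y)
      (∑ s ∈ Finset.range (n - k), (1 / ((n : ℝ) - k - s)) * llP α β (k + s) k x y) α := by
  have hshift : HasDerivAt (fun a : ℝ => a + 2 * k + 1) 1 α :=
    ((hasDerivAt_id' α).add_const _).add_const _
  have h := (((hasDerivAt_laguerreL_param (n - k) _ x).comp α hshift).mul_const (x ^ k)).mul_const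
    (laguerreL β k (y / x))
  refine h.congr_deriv ?_
  rw [mul_one, sum_mul, sum_mul]
  refine sum_congr rfl fun s hs => ?_
  rw [llP, Nat.add_sub_cancel_left, Nat.cast_sub (by grind)]
  ring

/-- Parameter derivative with respect to `α` of the Laguerre–Laguerre Koornwinder polynomials. -/
theorem llP_hasDerivAt_param_alpha
    (β : ℝ) (hβ : β > -1) (n k : ℕ) (hk : 0 ≤ k) (hkn : k + 1 ≤ n)
    (α : ℝ) (hα : α > -1) (hαβ : α - β > -1) (x : ℝ) (hx : 0 < x) (y : ℝ) :
    HasDerivAt (fun a : ℝ => llP a β n k x y)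
      (∑ s ∈ Finset.range (n - k), (1 / ((n : ℝ) - k - s)) * llP α β (k + s) k x y) α :=
  llP_hasDerivAt_param_alpha_general β n k α x y
end

section
/- Fix reals α, β > −1 and integers n, k, m, j with 0 ≤ k, k + 1 ≤ n, and 0 ≤ j ≤ m. Let Q_{n,k}(x,y) denote the derivative at α of the map a ↦ P^{(a,β)}_{n,k}(x,y). If j ≠ k, or if j = k and m > n, then ∬_{y² ≤ x ≤ 1} P^{(α,β)}_{m,j}(x,y) · Q_{n,k}(x,y) · (1−x)^α (x−y²)^β dx dy = 0. -/
/-!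
Substituting `y = √x · t` maps `(0,1] × [-1,1]` onto the biangle minus the origin with Jacobian
`√x`, and the integrand separates as `G(x) · H(t)` with
`H(t) = P_j^{(β,β)}(t) P_k^{(β,β)}(t) (1-t²)^β` and
`G(x) = P_{m-j}^{(α,β+j+1/2)}(2x-1) · ∂_α P_{n-k}^{(α,β+k+1/2)}(2x-1) · x^{β+(j+k+1)/2} (1-x)^α`.
If `j ≠ k`, `∫ H = 0` by orthogonality of the Gegenbauer polynomials. If `j = k`, the `α`-derivative
of a Jacobi polynomial of degree `n-k` is still a polynomial of degree `≤ n-k < m-k`, so `∫ G = 0`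
by orthogonality of `P_{m-k}^{(α,β+k+1/2)}(2x-1)` to lower degrees on `[0,1]` for the weight
`x^{β+k+1/2} (1-x)^α`. On a monomial `x^s` each term of the Jacobi sum integrates to a Beta value,
and the resulting sum is a Chu–Vandermonde sum equal to `(s+1-N)_N = 0`.
-/

open Finset MeasureTheory Real

/-- Koornwinder polynomial on the parabolic biangle,
`P^{(α,β)}_{n,k}(x,y) = P^{(α,β+k+1/2)}_{n-k}(2x-1) · x^{k/2} · P^{(β,β)}_k(y/√x)`. -/
noncomputable def biangleP (α β : ℝ) (n k : ℕ) (x y : ℝ) : ℝ :=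
  jacobiP α (β + k + 1/2) (n - k) (2 * x - 1) * x ^ ((k : ℝ) / 2) *
    jacobiP β β k (y / Real.sqrt x)

lemma poch_succ (a : ℝ) (m : ℕ) : poch a (m + 1) = poch a m * (a + m) :=
  prod_range_succ _ _

lemma poch_succ' (a : ℝ) (m : ℕ) : poch a (m + 1) = a * poch (a + 1) m := by
  simp only [poch, prod_range_succ', Nat.cast_succ, Nat.cast_zero, add_zero, add_assoc,
    add_comm (1 : ℝ), mul_comm a]

lemma poch_pos {a : ℝ} (ha : 0 < a) (m : ℕ) : 0 < poch a m :=
  prod_pos fun _ _ => by positivity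

lemma poch_neg_natCast_eq_zero {r N : ℕ} (h : r < N) : poch (-r) N = 0 :=
  prod_eq_zero (mem_range.mpr h) (neg_add_cancel _)

lemma Gamma_add_natCast {x : ℝ} (hx : 0 < x) (r : ℕ) : Gamma (x + r) = poch x r * Gamma x := by
  induction r with
  | zero => simp [poch]
  | succ r ih =>
    rw [Nat.cast_succ, ← add_assoc, Gamma_add_one (by positivity), ih, poch_succ]
    ring

-- Chu–Vandermonde `₂F₁(-N, A; B; 1) = (B - A)_N / (B)_N`, with the denominators cleared.
lemma sum_choose_mul_poch_mul_poch (N : ℕ) (A B : ℝ) :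
    ∑ i ∈ range (N + 1), (N.choose i : ℝ) * ((-1) ^ i * poch A i * poch (B + i) (N - i)) =
      poch (B - A) N := by
  induction N generalizing A B with
  | zero => simp [poch]
  | succ N ih =>
    rw [sum_choose_succ_mul (fun i l => (-1) ^ i * poch A i * poch (B + i) l)]
    have hfirst : ∀ i ∈ range (N + 1),
        (N.choose i : ℝ) * ((-1) ^ i * poch A i * poch (B + i) (N + 1 - i)) =
          (B + N) * ((N.choose i : ℝ) * ((-1) ^ i * poch A i * poch (B + i) (N - i))) := by
      intro i hi
      have hiN : i ≤ N := Nat.lt_succ_iff.mp (mem_range.mp hi)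
      rw [Nat.sub_add_comm hiN, poch_succ, Nat.cast_sub hiN]
      ring
    have hsecond : ∀ i ∈ range (N + 1),
        (N.choose i : ℝ) * ((-1) ^ (i + 1) * poch A (i + 1) * poch (B + ↑(i + 1)) (N - i)) =
          -A * ((N.choose i : ℝ) * ((-1) ^ i * poch (A + 1) i * poch (B + 1 + i) (N - i))) := by
      intro i _
      rw [poch_succ', show B + ↑(i + 1) = B + 1 + i by push_cast; ring]
      ring
    rw [sum_congr rfl hfirst, sum_congr rfl hsecond, ← mul_sum, ← mul_sum, ih, ih,
      add_sub_add_right_eq_sub, poch_succ]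
    ring

lemma ofReal_rpow_mul_one_sub_rpow {p q x : ℝ} (hx : x ∈ Set.Icc (0 : ℝ) 1) :
    ((x ^ (p - 1) * (1 - x) ^ (q - 1) : ℝ) : ℂ) =
      (x : ℂ) ^ ((p : ℂ) - 1) * (1 - x) ^ ((q : ℂ) - 1) := by
  push_cast [Complex.ofReal_cpow hx.1, Complex.ofReal_cpow (sub_nonneg.mpr hx.2)]
  rfl

lemma intervalIntegrable_rpow_mul_one_sub_rpow {p q : ℝ} (hp : 0 < p) (hq : 0 < q) :
    IntervalIntegrable (fun x : ℝ => x ^ (p - 1) * (1 - x) ^ (q - 1)) volume 0 1 := by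
  refine (Complex.betaIntegral_convergent (u := p) (v := q) (by simpa) (by simpa)).norm.congr_uIoo
    fun x hx => ?_
  rw [Set.uIoo_of_le zero_le_one] at hx
  have h1x : 0 < 1 - x := by linarith [hx.2]
  dsimp only
  rw [← ofReal_rpow_mul_one_sub_rpow (Set.Ioo_subset_Icc_self hx), Complex.norm_real,
    Real.norm_of_nonneg (mul_nonneg (rpow_nonneg hx.1.le _) (rpow_nonneg h1x.le _))]

lemma integral_rpow_mul_one_sub_rpow {p q : ℝ} (hp : 0 < p) (hq : 0 < q) :
    ∫ x in (0 : ℝ)..1, x ^ (p - 1) * (1 - x) ^ (q - 1) = Gamma p * Gamma q / Gamma (p + q) := by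
  apply Complex.ofReal_injective
  rw [← intervalIntegral.integral_ofReal]
  push_cast [← Complex.Gamma_ofReal,
    ← Complex.betaIntegral_eq_Gamma_mul_div p q (by simpa) (by simpa)]
  refine intervalIntegral.integral_congr fun x hx => ?_
  rw [Set.uIcc_of_le zero_le_one] at hx
  rw [← ofReal_rpow_mul_one_sub_rpow hx, Complex.ofReal_mul]

noncomputable def jacobiCoeff (a b : ℝ) (N i : ℕ) : ℝ :=
  poch (a + i + 1) (N - i) * poch (N + a + b + 1) i /
    ((Nat.factorial (N - i) : ℝ) * (Nat.factorial i : ℝ))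

lemma jacobiP_eq_sum (a b : ℝ) (N : ℕ) (z : ℝ) :
    jacobiP a b N z = ∑ i ∈ range (N + 1), jacobiCoeff a b N i * ((z - 1) / 2) ^ i :=
  rfl

lemma jacobiP_two_mul_sub_one (a b : ℝ) (N : ℕ) (x : ℝ) :
    jacobiP a b N (2 * x - 1) = ∑ i ∈ range (N + 1), jacobiCoeff a b N i * (x - 1) ^ i := by
  simp only [jacobiP_eq_sum, show (2 * x - 1 - 1) / 2 = x - 1 by ring]

lemma jacobiP_two_mul_sub_one_mul_pow_mul_weight (a b : ℝ) (N s : ℕ) {x : ℝ}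
    (hx : x ∈ Set.Ioo (0 : ℝ) 1) :
    jacobiP a b N (2 * x - 1) * x ^ s * (x ^ b * (1 - x) ^ a) =
      ∑ i ∈ range (N + 1), (-1) ^ i * jacobiCoeff a b N i *
        (x ^ ((b + s + 1) - 1) * (1 - x) ^ ((a + i + 1) - 1)) := by
  have h1x : 0 < 1 - x := by linarith [hx.2]
  rw [jacobiP_two_mul_sub_one, sum_mul, sum_mul]
  refine sum_congr rfl fun i _ => ?_
  rw [add_sub_cancel_right, add_sub_cancel_right, rpow_add_natCast hx.1.ne',
    rpow_add_natCast h1x.ne', show x - 1 = -(1 - x) by ring, neg_pow]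
  ring

lemma intervalIntegrable_jacobiP_mul_pow_mul_weight {a b : ℝ} (ha : -1 < a) (hb : -1 < b)
    (N s : ℕ) :
    IntervalIntegrable (fun x => jacobiP a b N (2 * x - 1) * x ^ s * (x ^ b * (1 - x) ^ a))
      volume 0 1 := by
  have hterm (i : ℕ) := (intervalIntegrable_rpow_mul_one_sub_rpow (p := b + s + 1)
    (q := a + i + 1) (by linarith [Nat.cast_nonneg (α := ℝ) s])
    (by linarith [Nat.cast_nonneg (α := ℝ) i])).const_mul ((-1) ^ i * jacobiCoeff a b N i)
  refine (IntervalIntegrable.sum (range (N + 1)) fun i _ => hterm i).congr_uIoo fun x hx => ?_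
  rw [Set.uIoo_of_le zero_le_one] at hx
  simp only [Finset.sum_apply, jacobiP_two_mul_sub_one_mul_pow_mul_weight a b N s hx]

lemma integral_jacobiCoeff_mul_rpow_mul_one_sub_rpow {a b : ℝ} (ha : -1 < a) (hb : -1 < b)
    {N s i : ℕ} (hiN : i ≤ N) :
    ∫ x in (0 : ℝ)..1, (-1) ^ i * jacobiCoeff a b N i *
        (x ^ ((b + s + 1) - 1) * (1 - x) ^ ((a + i + 1) - 1)) =
      Gamma (b + s + 1) * Gamma (a + N + 1) / (N.factorial * Gamma (a + b + s + 2 + N)) *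
        ((N.choose i : ℝ) *
          ((-1) ^ i * poch (N + a + b + 1) i * poch (a + b + s + 2 + i) (N - i))) := by
  have hp : 0 < b + s + 1 := by linarith [Nat.cast_nonneg (α := ℝ) s]
  have hq : 0 < a + i + 1 := by linarith [Nat.cast_nonneg (α := ℝ) i]
  have hpq : 0 < a + b + s + 2 + i := by linarith
  have hΓa : Gamma (a + N + 1) = poch (a + i + 1) (N - i) * Gamma (a + i + 1) := by
    rw [← Gamma_add_natCast hq, Nat.cast_sub hiN]; congr 1; ring
  have hΓab : Gamma (a + b + s + 2 + N) =
      poch (a + b + s + 2 + i) (N - i) * Gamma (a + b + s + 2 + i) := by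
    rw [← Gamma_add_natCast hpq, Nat.cast_sub hiN]; congr 1; ring
  have hchoose : (N.choose i : ℝ) * i.factorial * (N - i).factorial = N.factorial := by
    exact_mod_cast Nat.choose_mul_factorial_mul_factorial hiN
  rw [intervalIntegral.integral_const_mul, integral_rpow_mul_one_sub_rpow hp hq,
    show b + s + 1 + (a + i + 1) = a + b + s + 2 + i by ring, jacobiCoeff, hΓa, hΓab, ← hchoose]
  have := (Gamma_pos_of_pos hpq).ne'
  have := (poch_pos hpq (N - i)).ne'
  have : (N.choose i : ℝ) ≠ 0 := by exact_mod_cast (Nat.choose_pos hiN).ne'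
  field_simp

lemma integral_jacobiP_mul_pow_mul_weight_eq_zero {a b : ℝ} (ha : -1 < a) (hb : -1 < b)
    {N s : ℕ} (hs : s < N) :
    ∫ x in (0 : ℝ)..1, jacobiP a b N (2 * x - 1) * x ^ s * (x ^ b * (1 - x) ^ a) = 0 := by
  rw [intervalIntegral.integral_congr_Ioo_of_le zero_le_one fun x hx =>
      jacobiP_two_mul_sub_one_mul_pow_mul_weight a b N s hx,
    intervalIntegral.integral_finsetSum fun i _ => (intervalIntegrable_rpow_mul_one_sub_rpow
      (by linarith [Nat.cast_nonneg (α := ℝ) s])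
      (by linarith [Nat.cast_nonneg (α := ℝ) i])).const_mul _,
    sum_congr rfl fun i hi => integral_jacobiCoeff_mul_rpow_mul_one_sub_rpow ha hb
      (Nat.lt_succ_iff.mp (mem_range.mp hi)),
    ← mul_sum, sum_choose_mul_poch_mul_poch,
    show a + b + s + 2 - (N + a + b + 1) = -((N - 1 - s : ℕ) : ℝ) by
      push_cast [Nat.cast_sub (by omega : s ≤ N - 1), Nat.cast_sub (by omega : 1 ≤ N)]; ring,
    poch_neg_natCast_eq_zero (by omega), mul_zero]

open Polynomial in
lemma integral_jacobiP_mul_eval_mul_weight_eq_zero {a b : ℝ} (ha : -1 < a) (hb : -1 < b)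
    {N : ℕ} {q : ℝ[X]} (hq : q.natDegree < N) :
    ∫ x in (0 : ℝ)..1, jacobiP a b N (2 * x - 1) * q.eval x * (x ^ b * (1 - x) ^ a) = 0 := by
  have hexpand : ∀ x, jacobiP a b N (2 * x - 1) * q.eval x * (x ^ b * (1 - x) ^ a) =
      ∑ s ∈ range (q.natDegree + 1),
        q.coeff s * (jacobiP a b N (2 * x - 1) * x ^ s * (x ^ b * (1 - x) ^ a)) := fun x => by
    rw [eval_eq_sum_range, mul_sum, sum_mul]
    exact sum_congr rfl fun s _ => by ring
  simp_rw [hexpand]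
  rw [intervalIntegral.integral_finsetSum fun s _ =>
    (intervalIntegrable_jacobiP_mul_pow_mul_weight ha hb N s).const_mul _]
  refine sum_eq_zero fun s hs => ?_
  rw [intervalIntegral.integral_const_mul,
    integral_jacobiP_mul_pow_mul_weight_eq_zero ha hb (by have := mem_range.mp hs; omega),
    mul_zero]

open Polynomial in
lemma exists_natDegree_le_eval_eq_sum_mul_sub_one_pow (d : ℕ → ℝ) (N : ℕ) :
    ∃ q : ℝ[X], q.natDegree ≤ N ∧ ∀ x, q.eval x = ∑ i ∈ range (N + 1), d i * (x - 1) ^ i := by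
  refine ⟨∑ i ∈ range (N + 1), C (d i) * (X - 1) ^ i, ?_, fun x => by simp [eval_finsetSum]⟩
  refine natDegree_sum_le_of_forall_le _ _ fun i hi => ?_
  have := mem_range.mp hi
  exact (natDegree_C_mul_le _ _).trans
    ((natDegree_pow_le_of_le _ (natDegree_X_sub_C_le 1)).trans (by omega))

lemma integral_jacobiP_mul_jacobiP_eq_zero {β : ℝ} (hβ : -1 < β) {j k : ℕ} (hjk : j ≠ k) :
    ∫ t in (-1 : ℝ)..1, jacobiP β β j t * jacobiP β β k t * (1 - t ^ 2) ^ β = 0 := by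
  wlog hlt : j < k generalizing j k
  · simpa only [mul_comm (jacobiP β β j _)] using this hjk.symm (by omega)
  obtain ⟨q, hq, hqx⟩ := exists_natDegree_le_eval_eq_sum_mul_sub_one_pow (jacobiCoeff β β j) j
  have hsub := intervalIntegral.integral_comp_mul_sub
    (fun t => jacobiP β β j t * jacobiP β β k t * (1 - t ^ 2) ^ β) (two_ne_zero (α := ℝ)) 1
    (a := 0) (b := 1)
  norm_num at hsub
  have hweight : Set.EqOn
      (fun x => jacobiP β β j (2 * x - 1) * jacobiP β β k (2 * x - 1) * (1 - (2 * x - 1) ^ 2) ^ β)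
      (fun x => 4 ^ β * (jacobiP β β k (2 * x - 1) * q.eval x * (x ^ β * (1 - x) ^ β)))
      (Set.uIcc 0 1) := fun x hx => by
    rw [Set.uIcc_of_le zero_le_one] at hx
    have h1x : 0 ≤ 1 - x := sub_nonneg.mpr hx.2
    dsimp only
    rw [show 1 - (2 * x - 1) ^ 2 = 4 * (x * (1 - x)) by ring,
      mul_rpow (by norm_num) (mul_nonneg hx.1 h1x), mul_rpow hx.1 h1x, hqx, jacobiP_two_mul_sub_one]
    ring
  rw [intervalIntegral.integral_congr hweight, intervalIntegral.integral_const_mul,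
    integral_jacobiP_mul_eval_mul_weight_eq_zero hβ hβ (hq.trans_lt hlt), mul_zero] at hsub
  linarith

lemma differentiable_jacobiCoeff (b : ℝ) (N i : ℕ) :
    Differentiable ℝ fun a => jacobiCoeff a b N i := by
  unfold jacobiCoeff poch
  fun_prop

lemma differentiable_jacobiP (b : ℝ) (N : ℕ) (z : ℝ) :
    Differentiable ℝ fun a => jacobiP a b N z := by
  simp only [jacobiP_eq_sum]
  exact Differentiable.fun_sum fun i _ => (differentiable_jacobiCoeff b N i).mul_const _

open Polynomial in
lemma exists_natDegree_le_eval_eq_deriv_jacobiP (α b : ℝ) (N : ℕ) :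
    ∃ q : ℝ[X], q.natDegree ≤ N ∧
      ∀ x, q.eval x = deriv (fun a => jacobiP a b N (2 * x - 1)) α := by
  have hderiv : ∀ x, deriv (fun a => jacobiP a b N (2 * x - 1)) α =
      ∑ i ∈ range (N + 1), deriv (fun a => jacobiCoeff a b N i) α * (x - 1) ^ i := fun x => by
    simp_rw [jacobiP_two_mul_sub_one]
    rw [deriv_fun_sum fun i _ => ((differentiable_jacobiCoeff b N i).mul_const _).differentiableAt]
    exact sum_congr rfl fun i _ =>
      deriv_mul_const (differentiable_jacobiCoeff b N i).differentiableAt _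
  simp_rw [hderiv]
  exact exists_natDegree_le_eval_eq_sum_mul_sub_one_pow _ N

lemma deriv_biangleP (α β : ℝ) (n k : ℕ) (x y : ℝ) :
    deriv (fun a => biangleP a β n k x y) α =
      deriv (fun a => jacobiP a (β + k + 1 / 2) (n - k) (2 * x - 1)) α *
        (x ^ ((k : ℝ) / 2) * jacobiP β β k (y / √x)) := by
  simp only [biangleP, mul_assoc]
  exact deriv_mul_const (differentiable_jacobiP _ _ _ _) _

noncomputable def biangleParam (q : ℝ × ℝ) : ℝ × ℝ := (q.1, √q.1 * q.2)

lemma det_fst_prod_smul_snd_add_smul_fst (u v : ℝ) :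
    ((ContinuousLinearMap.fst ℝ ℝ ℝ).prod
      (u • ContinuousLinearMap.snd ℝ ℝ ℝ + v • ContinuousLinearMap.fst ℝ ℝ ℝ)).det = u := by
  rw [ContinuousLinearMap.det, ← LinearMap.det_toMatrix (Module.Basis.finTwoProd ℝ),
    Matrix.det_fin_two]
  simp [LinearMap.toMatrix_apply]

lemma hasFDerivAt_biangleParam {q : ℝ × ℝ} (hq : 0 < q.1) :
    HasFDerivAt biangleParam ((ContinuousLinearMap.fst ℝ ℝ ℝ).prod
      (√q.1 • ContinuousLinearMap.snd ℝ ℝ ℝ +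
        (q.2 / (2 * √q.1)) • ContinuousLinearMap.fst ℝ ℝ ℝ)) q := by
  refine hasFDerivAt_fst.prodMk ?_
  have hsqrt := (hasDerivAt_sqrt hq.ne').comp_hasFDerivAt q (hasFDerivAt_fst (𝕜 := ℝ) (p := q))
  refine (hsqrt.mul hasFDerivAt_snd).congr_fderiv ?_
  ext <;> simp
  ring

lemma injOn_biangleParam : Set.InjOn biangleParam {q | 0 < q.1} := by
  rintro ⟨x, t⟩ hx ⟨x', t'⟩ - h
  simp only [biangleParam, Prod.mk.injEq] at h ⊢
  obtain ⟨rfl, h⟩ := h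
  exact ⟨rfl, mul_left_cancel₀ (sqrt_pos.mpr hx).ne' h⟩

lemma biangleParam_image :
    biangleParam '' (Set.Ioc 0 1 ×ˢ Set.Icc (-1) 1) =
      {p : ℝ × ℝ | p.2 ^ 2 ≤ p.1 ∧ p.1 ≤ 1} \ {0} := by
  ext ⟨x, y⟩
  simp only [biangleParam, Set.mem_image, Set.mem_prod, Set.mem_Ioc, Set.mem_Icc, Prod.mk.injEq,
    Set.mem_sdiff, Set.mem_ofPred_eq, Set.mem_singleton_iff, Prod.mk_eq_zero]
  constructor
  · rintro ⟨⟨x, t⟩, ⟨⟨hx0, hx1⟩, ht⟩, rfl, rfl⟩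
    have ht2 : t ^ 2 ≤ 1 := by nlinarith
    refine ⟨⟨?_, hx1⟩, fun h => hx0.ne' h.1⟩
    rw [mul_pow, sq_sqrt hx0.le]
    nlinarith
  · rintro ⟨⟨hy, hx1⟩, hne⟩
    have hx0 : 0 < x := ((sq_nonneg y).trans hy).lt_of_ne' fun hx => hne ⟨hx, by nlinarith⟩
    refine ⟨(x, y / √x), ⟨⟨hx0, hx1⟩, ?_⟩, rfl, mul_div_cancel₀ _ (sqrt_pos.mpr hx0).ne'⟩
    rw [← abs_le, abs_div, abs_of_pos (sqrt_pos.mpr hx0), div_le_one (sqrt_pos.mpr hx0)]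
    exact abs_le_sqrt hy

lemma setIntegral_biangle_eq_mul {F : ℝ × ℝ → ℝ} {g h : ℝ → ℝ}
    (hF : ∀ x ∈ Set.Ioc (0 : ℝ) 1, ∀ t ∈ Set.Icc (-1 : ℝ) 1, √x * F (x, √x * t) = g x * h t) :
    ∫ p in {p : ℝ × ℝ | p.2 ^ 2 ≤ p.1 ∧ p.1 ≤ 1}, F p =
      (∫ x in (0 : ℝ)..1, g x) * ∫ t in (-1 : ℝ)..1, h t := by
  have hs : MeasurableSet (Set.Ioc (0 : ℝ) 1 ×ˢ Set.Icc (-1 : ℝ) 1) :=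
    measurableSet_Ioc.prod measurableSet_Icc
  rw [← setIntegral_congr_set (sdiff_null_ae_eq_self (measure_singleton 0)), ← biangleParam_image,
    integral_image_eq_integral_abs_det_fderiv_smul volume hs
      (fun q hq => (hasFDerivAt_biangleParam hq.1.1).hasFDerivWithinAt)
      (injOn_biangleParam.mono fun q hq => hq.1.1) F]
  rw [setIntegral_congr_fun (g := fun q => g q.1 * h q.2) hs fun q hq => by
      rw [det_fst_prod_smul_snd_add_smul_fst, abs_of_nonneg (sqrt_nonneg _), smul_eq_mul]
      exact hF q.1 hq.1 q.2 hq.2,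
    Measure.volume_eq_prod, setIntegral_prod_mul, intervalIntegral.integral_of_le zero_le_one,
    intervalIntegral.integral_of_le (by norm_num), integral_Icc_eq_integral_Ioc]

lemma sqrt_mul_biangle_integrand_eq_mul (α β : ℝ) (n k m j : ℕ) {x t : ℝ} (hx : 0 < x) (ht : t ^ 2 ≤ 1) :
    √x * (biangleP α β m j x (√x * t) * deriv (fun a => biangleP a β n k x (√x * t)) α *
      ((1 - x) ^ α * (x - (√x * t) ^ 2) ^ β)) =
    (jacobiP α (β + j + 1 / 2) (m - j) (2 * x - 1) *
        deriv (fun a => jacobiP a (β + k + 1 / 2) (n - k) (2 * x - 1)) α *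
        (x ^ (β + (j + k + 1) / 2) * (1 - x) ^ α)) *
      (jacobiP β β j t * jacobiP β β k t * (1 - t ^ 2) ^ β) := by
  rw [deriv_biangleP, biangleP, mul_div_cancel_left₀ _ (sqrt_pos.mpr hx).ne', mul_pow,
    sq_sqrt hx.le, show x - x * t ^ 2 = x * (1 - t ^ 2) by ring,
    mul_rpow hx.le (sub_nonneg.mpr ht), sqrt_eq_rpow,
    show β + (j + k + 1) / 2 = j / 2 + k / 2 + β + 1 / 2 by ring, rpow_add hx, rpow_add hx,
    rpow_add hx]
  ring

theorem biangle_inner_paramDeriv_eq_zero_general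
    (α β : ℝ) (hα : α > -1) (hβ : β > -1) (n k m j : ℕ)
    (hkn : k + 1 ≤ n)
    (hcase : j ≠ k ∨ (j = k ∧ m > n)) :
    ∫ p in {p : ℝ × ℝ | p.2 ^ 2 ≤ p.1 ∧ p.1 ≤ 1},
        biangleP α β m j p.1 p.2 * deriv (fun a : ℝ => biangleP a β n k p.1 p.2) α *
          ((1 - p.1) ^ α * (p.1 - p.2 ^ 2) ^ β) = 0 := by
  rw [setIntegral_biangle_eq_mul fun x hx t ht =>
    sqrt_mul_biangle_integrand_eq_mul α β n k m j hx.1 (by nlinarith [ht.1, ht.2])]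
  rcases hcase with hjk | ⟨rfl, hmn⟩
  · rw [integral_jacobiP_mul_jacobiP_eq_zero hβ hjk, mul_zero]
  · obtain ⟨q, hq, hqx⟩ := exists_natDegree_le_eval_eq_deriv_jacobiP α (β + j + 1 / 2) (n - j)
    have hb : -1 < β + j + 1 / 2 := by linarith [Nat.cast_nonneg (α := ℝ) j]
    have hG := integral_jacobiP_mul_eval_mul_weight_eq_zero hα hb
      (hq.trans_lt (by omega : n - j < m - j))
    simp_rw [hqx] at hG
    rw [show β + (j + j + 1) / 2 = β + j + 1 / 2 by ring, hG, zero_mul]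

/-- Vanishing cases of the inner product of a biangle Koornwinder polynomial with the
parameter derivative (in `α`) of another. -/
theorem biangle_inner_paramDeriv_eq_zero
    (α β : ℝ) (hα : α > -1) (hβ : β > -1) (n k m j : ℕ)
    (hk : 0 ≤ k) (hkn : k + 1 ≤ n) (hj : 0 ≤ j) (hjm : j ≤ m)
    (hcase : j ≠ k ∨ (j = k ∧ m > n)) :
    ∫ p in {p : ℝ × ℝ | p.2 ^ 2 ≤ p.1 ∧ p.1 ≤ 1},
        biangleP α β m j p.1 p.2 * deriv (fun a : ℝ => biangleP a β n k p.1 p.2) α *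
          ((1 - p.1) ^ α * (p.1 - p.2 ^ 2) ^ β) = 0 :=
  biangle_inner_paramDeriv_eq_zero_general α β hα hβ n k m j hkn hcase
end

section
/- Fix reals α, β with α > −1, β > −1 and α − β > −1, and integers n, k, m, j with 0 ≤ k ≤ n and 0 ≤ j ≤ m. Then ∫_0^∞∫_0^∞ P^{(α,β)}_{n,k}(x,y) · P^{(α,β)}_{m,j}(x,y) · x^{α−β} y^{β} e^{−(x+y/x)} dy dx equals t_{n,k}^{(α,β)} if n = m and k = j, and equals 0 otherwise, where t_{n,k}^{(α,β)} = Γ(β+k+1) Γ(α+n+k+2) / [k! (n−k)!]. -/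
open Finset MeasureTheory Real

/-- Squared norm constant `t_{n,k}^{(α,β)}` of the Laguerre–Laguerre Koornwinder polynomials. -/
noncomputable def tconst (α β : ℝ) (n k : ℕ) : ℝ :=
  Real.Gamma (β + k + 1) * Real.Gamma (α + n + k + 2) /
    ((Nat.factorial k : ℝ) * (Nat.factorial (n - k) : ℝ))

/-!
Substituting `y = x u` separates the variables: the inner integral becomes `x^(β+1)` times the
Laguerre orthogonality integral in `u` for the parameter `β`, which forces `k = j` and leaves
`x^(α+2k+1) e^(-x)` as the weight of the outer Laguerre integral in `x`.

Laguerre orthogonality follows from the moments `∫ L_p^(γ)(x) x^l x^γ e^(-x) dx` for `l ≤ p`: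
integrating the explicit expansion of `L_p^(γ)` term by term (each term is a `Γ` integral) gives
`Γ(γ+p+1)/p!` times an alternating binomial sum, i.e. up to sign the `p`-th forward difference,
of the degree-`l` polynomial `i ↦ (γ+1+i)_l`. It vanishes for `l < p` and is `(-1)^p p!` for `l = p`.
-/
open scoped Nat

open Polynomial in
lemma poch_eq_eval_ascPochhammer (a : ℝ) (m : ℕ) : poch a m = (ascPochhammer ℝ m).eval a := by
  induction m with
  | zero => simp [poch]
  | succ m ih => simp [poch, Finset.prod_range_succ, ascPochhammer_succ_right, ← ih]

lemma Gamma_add_natCast_eq_poch_mul (s : ℝ) (hs : 0 < s) (N : ℕ) :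
    Gamma (s + N) = poch s N * Gamma s := by
  induction N with
  | zero => simp [poch]
  | succ N ih =>
    rw [Nat.cast_succ, ← add_assoc, Gamma_add_one (by positivity), ih, poch, poch,
      prod_range_succ]
    ring

open Polynomial in
theorem Polynomial.sum_range_neg_one_pow_mul_choose_mul_eval {R : Type*} [CommRing R]
    (P : R[X]) (p : ℕ) :
    ∑ i ∈ range (p + 1), (-1) ^ i * (p.choose i : R) * P.eval (i : R)
      = (-1) ^ p * (fwdDiff 1)^[p] P.eval 0 := by
  rw [fwdDiff_iter_eq_sum_shift, mul_sum]
  refine sum_congr rfl fun i hi => ?_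
  have hip : i ≤ p := Nat.lt_succ_iff.mp (mem_range.mp hi)
  have hsign : (-1 : R) ^ p * (-1) ^ (p - i) = (-1) ^ i := by
    rw [← pow_add, show p + (p - i) = i + 2 * (p - i) by omega, pow_add, pow_mul]
    simp
  simp only [zero_add, nsmul_eq_mul, mul_one, zsmul_eq_mul]
  push_cast
  rw [← mul_assoc, ← mul_assoc, hsign]

open Polynomial in
theorem sum_range_neg_one_pow_mul_choose_mul_poch (c : ℝ) {l p : ℕ} (hlp : l ≤ p) :
    ∑ i ∈ range (p + 1), (-1 : ℝ) ^ i * p.choose i * poch (c + i) l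
      = if l = p then (-1 : ℝ) ^ p * p ! else 0 := by
  set P : ℝ[X] := (ascPochhammer ℝ l).comp (X + C c)
  have hP : P.Monic := (monic_ascPochhammer ℝ l).comp (monic_X_add_C c) (by simp)
  have hdeg : P.natDegree = l := by simp [P, natDegree_comp, ascPochhammer_natDegree]
  have heval : ∀ i : ℕ, P.eval (i : ℝ) = poch (c + i) l := fun i => by
    simp [P, poch_eq_eval_ascPochhammer, add_comm]
  simp_rw [← heval, P.sum_range_neg_one_pow_mul_choose_mul_eval]
  split_ifs with h
  · subst h
    rw [← hdeg, P.fwdDiff_iter_degree_eq_factorial, hP.leadingCoeff]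
    simp
  · rw [fwdDiff_iter_eq_zero_of_degree_lt (by omega)]
    simp

noncomputable def laguerreCoeff (γ : ℝ) (p i : ℕ) : ℝ :=
  poch (γ + i + 1) (p - i) / ((p - i)! * i !)

lemma laguerreL_eq_sum (γ : ℝ) (p : ℕ) (x : ℝ) :
    laguerreL γ p x = ∑ i ∈ range (p + 1), laguerreCoeff γ p i * (-x) ^ i := rfl

lemma laguerreCoeff_self (γ : ℝ) (p : ℕ) : laguerreCoeff γ p p = 1 / p ! := by
  simp [laguerreCoeff, poch]

lemma laguerreCoeff_mul_Gamma {γ : ℝ} (hγ : -1 < γ) {p i : ℕ} (hip : i ≤ p) (l : ℕ) :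
    laguerreCoeff γ p i * Gamma (γ + (i + l : ℕ) + 1)
      = Gamma (γ + p + 1) / p ! * (p.choose i * poch (γ + 1 + i) l) := by
  have hs : 0 < γ + i + 1 := by linarith [(i.cast_nonneg : (0 : ℝ) ≤ i)]
  have hl : Gamma (γ + (i + l : ℕ) + 1) = poch (γ + 1 + i) l * Gamma (γ + i + 1) := by
    rw [show γ + 1 + (i : ℝ) = γ + i + 1 by ring, ← Gamma_add_natCast_eq_poch_mul _ hs]
    push_cast; ring_nf
  have hp : Gamma (γ + p + 1) = poch (γ + i + 1) (p - i) * Gamma (γ + i + 1) := by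
    rw [← Gamma_add_natCast_eq_poch_mul _ hs, Nat.cast_sub hip]; ring_nf
  have hchoose : (p.choose i : ℝ) * ((p - i)! * i !) = p ! := by
    rw [← mul_assoc, mul_right_comm]
    exact_mod_cast Nat.choose_mul_factorial_mul_factorial hip
  have hchoose_pos : (0 : ℝ) < p.choose i := by exact_mod_cast Nat.choose_pos hip
  rw [laguerreCoeff, hl, hp, ← hchoose]
  field_simp

section Laguerre

variable {γ : ℝ}

lemma integrableOn_pow_mul_weight (hγ : -1 < γ) (n : ℕ) :
    IntegrableOn (fun x => x ^ n * (x ^ γ * exp (-x))) (Set.Ioi 0) := by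
  refine (GammaIntegral_convergent (s := γ + n + 1)
    (by linarith [(n.cast_nonneg : (0 : ℝ) ≤ n)])).congr_fun
    (fun x hx => ?_) measurableSet_Ioi
  simp only [add_sub_cancel_right]
  rw [rpow_add hx, rpow_natCast]
  ring

lemma integral_pow_mul_weight (hγ : -1 < γ) (n : ℕ) :
    ∫ x in Set.Ioi 0, x ^ n * (x ^ γ * exp (-x)) = Gamma (γ + n + 1) := by
  rw [Gamma_eq_integral (by linarith [(n.cast_nonneg : (0 : ℝ) ≤ n)]), add_sub_cancel_right]
  refine setIntegral_congr_fun measurableSet_Ioi fun x hx => ?_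
  rw [rpow_add hx, rpow_natCast]
  ring

lemma laguerreL_mul_pow_mul_weight (p l : ℕ) (x : ℝ) :
    laguerreL γ p x * x ^ l * (x ^ γ * exp (-x))
      = ∑ i ∈ range (p + 1), laguerreCoeff γ p i * (-1) ^ i * (x ^ (i + l) * (x ^ γ * exp (-x))) := by
  rw [laguerreL_eq_sum, sum_mul, sum_mul]
  refine sum_congr rfl fun i _ => ?_
  rw [neg_pow, pow_add]
  ring

lemma integrableOn_laguerreL_mul_pow_mul_weight (hγ : -1 < γ) (p l : ℕ) :
    IntegrableOn (fun x => laguerreL γ p x * x ^ l * (x ^ γ * exp (-x))) (Set.Ioi 0) := by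
  simp_rw [laguerreL_mul_pow_mul_weight]
  exact integrable_finsetSum _ fun i _ =>
    (integrableOn_pow_mul_weight hγ (i + l)).const_mul _

theorem integral_laguerreL_mul_pow_mul_weight (hγ : -1 < γ) {p l : ℕ} (hlp : l ≤ p) :
    ∫ x in Set.Ioi 0, laguerreL γ p x * x ^ l * (x ^ γ * exp (-x))
      = if l = p then (-1) ^ p * Gamma (γ + p + 1) else 0 := by
  simp_rw [laguerreL_mul_pow_mul_weight]
  rw [integral_finsetSum _ fun i _ => (integrableOn_pow_mul_weight hγ (i + l)).const_mul _]
  simp_rw [integral_const_mul, integral_pow_mul_weight hγ]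
  calc ∑ i ∈ range (p + 1), laguerreCoeff γ p i * (-1) ^ i * Gamma (γ + (i + l : ℕ) + 1)
      = Gamma (γ + p + 1) / p ! *
          ∑ i ∈ range (p + 1), (-1 : ℝ) ^ i * p.choose i * poch (γ + 1 + i) l := by
        rw [mul_sum]
        refine sum_congr rfl fun i hi => ?_
        rw [mul_right_comm, laguerreCoeff_mul_Gamma hγ (Nat.lt_succ_iff.mp (mem_range.mp hi))]
        ring
    _ = if l = p then (-1) ^ p * Gamma (γ + p + 1) else 0 := by
        rw [sum_range_neg_one_pow_mul_choose_mul_poch _ hlp]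
        split_ifs
        · field_simp
        · rw [mul_zero]

lemma integral_laguerreL_mul_laguerreL_of_le (hγ : -1 < γ) {p q : ℕ} (hqp : q ≤ p) :
    ∫ x in Set.Ioi 0, laguerreL γ p x * laguerreL γ q x * (x ^ γ * exp (-x))
      = if p = q then Gamma (γ + p + 1) / p ! else 0 := by
  have hexpand : ∀ x, laguerreL γ p x * laguerreL γ q x * (x ^ γ * exp (-x))
      = ∑ l ∈ range (q + 1), laguerreCoeff γ q l * (-1) ^ l *
          (laguerreL γ p x * x ^ l * (x ^ γ * exp (-x))) := fun x => by
    rw [laguerreL_eq_sum γ q, mul_sum, sum_mul]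
    refine sum_congr rfl fun l _ => ?_
    rw [neg_pow]
    ring
  simp_rw [hexpand]
  rw [integral_finsetSum _ fun l _ =>
    (integrableOn_laguerreL_mul_pow_mul_weight hγ p l).const_mul _]
  rw [sum_congr rfl fun l hl => by
    rw [integral_const_mul, integral_laguerreL_mul_pow_mul_weight hγ
      ((Nat.lt_succ_iff.mp (mem_range.mp hl)).trans hqp), mul_ite, mul_zero]]
  rw [sum_ite_eq']
  by_cases hpq : p = q
  · subst hpq
    have hsign : (-1 : ℝ) ^ p * (-1) ^ p = 1 := by rw [← pow_add, Even.neg_one_pow ⟨p, rfl⟩]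
    rw [if_pos (self_mem_range_succ p), if_pos rfl, laguerreCoeff_self]
    linear_combination Gamma (γ + p + 1) / p ! * hsign
  · rw [if_neg (by rw [mem_range]; omega), if_neg hpq]

theorem integral_laguerreL_mul_laguerreL (hγ : -1 < γ) (p q : ℕ) :
    ∫ x in Set.Ioi 0, laguerreL γ p x * laguerreL γ q x * (x ^ γ * exp (-x))
      = if p = q then Gamma (γ + p + 1) / p ! else 0 := by
  rcases le_total q p with hqp | hpq
  · exact integral_laguerreL_mul_laguerreL_of_le hγ hqp
  · simp_rw [mul_comm (laguerreL γ p _), integral_laguerreL_mul_laguerreL_of_le hγ hpq]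
    by_cases h : q = p
    · subst h; rfl
    · rw [if_neg h, if_neg (Ne.symm h)]

theorem integral_laguerreL_div_mul_laguerreL_div (hγ : -1 < γ) (p q : ℕ) {x : ℝ} (hx : 0 < x) :
    ∫ y in Set.Ioi 0, laguerreL γ p (y / x) * laguerreL γ q (y / x) * (y ^ γ * exp (-(y / x)))
      = x ^ (γ + 1) * if p = q then Gamma (γ + p + 1) / p ! else 0 := by
  set G : ℝ → ℝ := fun u => laguerreL γ p u * laguerreL γ q u * (u ^ γ * exp (-u))
  have hscale : ∀ y ∈ Set.Ioi (0 : ℝ),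
      laguerreL γ p (y / x) * laguerreL γ q (y / x) * (y ^ γ * exp (-(y / x)))
        = x ^ γ * G (x⁻¹ * y) := fun y hy => by
    have hyγ : y ^ γ = x ^ γ * (y / x) ^ γ := by
      rw [← mul_rpow hx.le (div_pos hy hx).le, mul_div_cancel₀ _ hx.ne']
    simp only [G, inv_mul_eq_div, hyγ]
    ring
  rw [setIntegral_congr_fun measurableSet_Ioi hscale, integral_const_mul,
    integral_comp_mul_left_Ioi G 0 (inv_pos.mpr hx), mul_zero, inv_inv, smul_eq_mul,
    integral_laguerreL_mul_laguerreL hγ, rpow_add_one hx.ne']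
  ring

end Laguerre

lemma llP_mul_llP_mul_weight (α β : ℝ) (n k m j : ℕ) (x y : ℝ) :
    llP α β n k x y * llP α β m j x y * (x ^ (α - β) * y ^ β * exp (-(x + y / x)))
      = laguerreL (α + 2 * k + 1) (n - k) x * laguerreL (α + 2 * j + 1) (m - j) x *
          (x ^ k * x ^ j * x ^ (α - β) * exp (-x)) *
        (laguerreL β k (y / x) * laguerreL β j (y / x) * (y ^ β * exp (-(y / x)))) := by
  rw [llP, llP, neg_add, exp_add]
  ring

theorem integral_llP_mul_llP_mul_weight_inner {α β : ℝ} (hβ : -1 < β) (n k m j : ℕ) {x : ℝ}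
    (hx : 0 < x) :
    ∫ y in Set.Ioi 0, llP α β n k x y * llP α β m j x y *
        (x ^ (α - β) * y ^ β * exp (-(x + y / x)))
      = (if k = j then Gamma (β + k + 1) / k ! else 0) *
          (laguerreL (α + 2 * k + 1) (n - k) x * laguerreL (α + 2 * j + 1) (m - j) x *
            (x ^ (α + k + j + 1) * exp (-x))) := by
  have hpow : x ^ k * x ^ j * x ^ (α - β) * x ^ (β + 1) = x ^ (α + k + j + 1) := by
    rw [← rpow_natCast, ← rpow_natCast, ← rpow_add hx, ← rpow_add hx, ← rpow_add hx]
    ring_nf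
  simp_rw [llP_mul_llP_mul_weight]
  rw [integral_const_mul, integral_laguerreL_div_mul_laguerreL_div hβ k j hx, ← hpow]
  ring


theorem ll_orthogonality_general
    (α β : ℝ) (hα : α > -1) (hβ : β > -1) (n k m j : ℕ)
    (hkn : k ≤ n) (hjm : j ≤ m) :
    ∫ x in Set.Ioi (0 : ℝ), ∫ y in Set.Ioi (0 : ℝ),
        llP α β n k x y * llP α β m j x y *
          (x ^ (α - β) * y ^ β * Real.exp (-(x + y / x)))
      = if n = m ∧ k = j then tconst α β n k else 0 := by
  rw [setIntegral_congr_fun measurableSet_Ioi fun x hx =>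
    integral_llP_mul_llP_mul_weight_inner hβ n k m j hx]
  rcases eq_or_ne k j with rfl | hkj
  · have hγ : -1 < α + 2 * k + 1 := by linarith [(k.cast_nonneg : (0 : ℝ) ≤ k)]
    simp only [if_true, and_true, show α + k + k + 1 = α + 2 * k + 1 by ring]
    rw [integral_const_mul, integral_laguerreL_mul_laguerreL hγ]
    by_cases hnm : n = m
    · subst hnm
      rw [if_pos rfl, if_pos rfl, tconst, Nat.cast_sub hkn]
      ring_nf
    · rw [if_neg (by omega), if_neg hnm, mul_zero]
  · simp [hkj]

/-- Orthogonality of the Laguerre–Laguerre Koornwinder polynomials. -/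
theorem ll_orthogonality
    (α β : ℝ) (hα : α > -1) (hβ : β > -1) (hαβ : α - β > -1) (n k m j : ℕ)
    (hk : 0 ≤ k) (hkn : k ≤ n) (hj : 0 ≤ j) (hjm : j ≤ m) :
    ∫ x in Set.Ioi (0 : ℝ), ∫ y in Set.Ioi (0 : ℝ),
        llP α β n k x y * llP α β m j x y *
          (x ^ (α - β) * y ^ β * Real.exp (-(x + y / x)))
      = if n = m ∧ k = j then tconst α β n k else 0 :=
  ll_orthogonality_general α β hα hβ n k m j hkn hjm
end
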